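/- arXiv:2110.07470 — 4 statements merged into one kernel-verified Lean document; each statement's English description precedes it below -/
import Mathlib

section
/- Let N ≥ 1, K ≥ 2, and for each n = 1, …, N let y_n^{(0)}, y_n^{(1)}, …, y_n^{(K-1)} ∈ {0,1} satisfy y_n^{(0)} = 1 and y_n^{(k)} ≤ y_n^{(k-1)} for each k = 1, …, K-1, and let q_{n,k} ∈ (0,1) for all n, k. Then the negative log-likelihood of the conditional chain equals the CONDOR loss: −∑_{n=1}^{N} ∑_{k=1}^{K-1} log( y_n^{(k)}·q_{n,k}·y_n^{(k-1)} + (1−y_n^{(k)})·(1 − q_{n,k}·y_n^{(k-1)}) ) = −∑_{n=1}^{N} ∑_{k=1}^{K-1} y_n^{(k-1)}·( y_n^{(k)}·log q_{n,k} + (1−y_n^{(k)})·log(1 − q_{n,k}) ). -/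
/-- The negative log-likelihood of the CONDOR conditional chain equals the CONDOR
maximum-likelihood loss. -/
theorem condor_nll_eq_loss (N K : ℕ) (hN : 1 ≤ N) (hK : 2 ≤ K)
    (y : ℕ → ℕ → ℝ) (q : ℕ → ℕ → ℝ)
    (hy0 : ∀ n, 1 ≤ n → n ≤ N → y n 0 = 1)
    (hybin : ∀ n k, 1 ≤ n → n ≤ N → k ≤ K - 1 → y n k = 0 ∨ y n k = 1)
    (hnest : ∀ n k, 1 ≤ n → n ≤ N → 1 ≤ k → k ≤ K - 1 → y n k ≤ y n (k - 1))
    (hq : ∀ n k, 1 ≤ n → n ≤ N → 1 ≤ k → k ≤ K - 1 → 0 < q n k ∧ q n k < 1) :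
    -(∑ n ∈ Finset.Icc 1 N, ∑ k ∈ Finset.Icc 1 (K - 1),
        Real.log (y n k * q n k * y n (k - 1) +
          (1 - y n k) * (1 - q n k * y n (k - 1)))) =
    -(∑ n ∈ Finset.Icc 1 N, ∑ k ∈ Finset.Icc 1 (K - 1),
        y n (k - 1) * (y n k * Real.log (q n k) +
          (1 - y n k) * Real.log (1 - q n k))) := by
  congr 1
  apply Finset.sum_congr rfl
  intro n hn
  rw [Finset.mem_Icc] at hn
  apply Finset.sum_congr rfl
  intro k hk
  rw [Finset.mem_Icc] at hk
  have hk1 : k - 1 ≤ K - 1 := le_trans (Nat.sub_le k 1) hk.2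
  have hbp := hybin n (k - 1) hn.1 hn.2 hk1
  have hbk := hybin n k hn.1 hn.2 hk.2
  have hne := hnest n k hn.1 hn.2 hk.1 hk.2
  rcases hbp with hp | hp
  · have hk0 : y n k = 0 := le_antisymm (hp ▸ hne) (by rcases hbk with h | h <;> simp [h])
    simp [hp, hk0]
  · rcases hbk with h | h <;> simp [hp, h]
end

section
/- There exists a constant C > 0 depending only on K with the following property: for every K ≥ 2, every family of real numbers p_0 = 1 ≥ p_1 ≥ ⋯ ≥ p_{K-1} ≥ 0, and every ε > 0, defining q*_k := (p_k + ε)/(p_{k-1} + 2ε) for k = 1, …, K-1, one has | ∏_{k'=1}^{k} q*_{k'} − p_k | ≤ C·ε for every k = 1, …, K-1. In fact C = 3K suffices. -/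
/-- There is a constant `C > 0` depending only on `K` (indeed `C = 3K` suffices) such
that for any rank consistent family `p 0 = 1 ≥ p 1 ≥ ⋯ ≥ p (K-1) ≥ 0` and any `ε > 0`,
the partial products of the regularized conditionals `(p k + ε)/(p (k-1) + 2ε)` recover
each `p k` up to error `C·ε`. -/
theorem product_of_regularized_conditionals_close (K : ℕ) (hK : 2 ≤ K) :
    ∃ C : ℝ, 0 < C ∧ C = 3 * K ∧
      ∀ p : ℕ → ℝ, p 0 = 1 →
        (∀ k, k ≤ K - 1 → 0 ≤ p k) →
        (∀ k, 1 ≤ k → k ≤ K - 1 → p k ≤ p (k - 1)) →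
        ∀ ε : ℝ, 0 < ε →
          ∀ k, 1 ≤ k → k ≤ K - 1 →
            |(∏ k' ∈ Finset.Icc 1 k, (p k' + ε) / (p (k' - 1) + 2 * ε)) - p k|
              ≤ C * ε := by
  have hKpos : (0:ℝ) < K := by
    have : 0 < K := by omega
    exact_mod_cast this
  refine ⟨3 * K, by linarith, rfl, ?_⟩
  intro p hp0 hnn hmono ε hε
  -- p is bounded by 1 on [0, K-1]
  have hle1 : ∀ k, k ≤ K - 1 → p k ≤ 1 := by
    intro k hk
    induction k with
    | zero => rw [hp0]
    | succ n ih =>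
      have h1 : p (n+1) ≤ p n := by
        have := hmono (n+1) (by omega) hk
        simpa using this
      exact h1.trans (ih (by omega))
  -- key induction
  have key : ∀ k, k ≤ K - 1 →
      |(∏ k' ∈ Finset.Icc 1 k, (p k' + ε) / (p (k' - 1) + 2 * ε)) - p k|
        ≤ 3 * k * ε := by
    intro k hk
    induction k with
    | zero => simp [hp0]
    | succ n ih =>
      have hn : n ≤ K - 1 := by omega
      have IH := ih hn
      have hnn1 : 0 ≤ p (n+1) := hnn (n+1) hk
      have hnn0 : 0 ≤ p n := hnn n hn
      have hle : p (n+1) ≤ p n := by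
        have := hmono (n+1) (by omega) hk
        simpa using this
      have hpn1 : p n ≤ 1 := hle1 n hn
      have hd : 0 < p n + 2 * ε := by linarith
      set q : ℝ := (p (n+1) + ε) / (p n + 2 * ε) with hq
      have hq0 : 0 ≤ q := by positivity
      have hq1 : q ≤ 1 := by
        rw [hq, div_le_one hd]; linarith
      have hprod : (∏ k' ∈ Finset.Icc 1 (n+1), (p k' + ε) / (p (k' - 1) + 2 * ε))
          = (∏ k' ∈ Finset.Icc 1 n, (p k' + ε) / (p (k' - 1) + 2 * ε)) * q := by
        rw [Finset.prod_Icc_succ_top (by omega)]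
        simp [hq]
      set P : ℝ := ∏ k' ∈ Finset.Icc 1 n, (p k' + ε) / (p (k' - 1) + 2 * ε) with hP
      have hsecond : |p n * q - p (n+1)| ≤ 2 * ε := by
        have heq : p n * q - p (n+1) = ε * (p n - 2 * p (n+1)) / (p n + 2 * ε) := by
          rw [hq]; field_simp; ring
        rw [heq, abs_div, abs_of_pos hd, div_le_iff₀ hd]
        rw [abs_le]
        constructor <;> nlinarith
      have hsplit : P * q - p (n+1) = (P - p n) * q + (p n * q - p (n+1)) := by ring
      have hfirst : |(P - p n) * q| ≤ 3 * n * ε := by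
        rw [abs_mul, abs_of_nonneg hq0]
        calc |P - p n| * q ≤ (3 * n * ε) * 1 :=
              mul_le_mul IH hq1 hq0 (by positivity)
          _ = 3 * n * ε := by ring
      rw [hprod]
      calc |P * q - p (n+1)|
          ≤ |(P - p n) * q| + |p n * q - p (n+1)| := by
            rw [hsplit]; exact abs_add_le _ _
        _ ≤ 3 * n * ε + 2 * ε := add_le_add hfirst hsecond
        _ ≤ 3 * (↑(n+1)) * ε := by push_cast; nlinarith
  intro k hk1 hk2
  have hkK : (k:ℝ) ≤ K := by
    have : k ≤ K := by omega
    exact_mod_cast this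
  calc |(∏ k' ∈ Finset.Icc 1 k, (p k' + ε) / (p (k' - 1) + 2 * ε)) - p k|
      ≤ 3 * k * ε := key k hk2
    _ ≤ 3 * K * ε := by nlinarith
end

section
/- Let σ(t) := 1/(1 + e^{−t}). Let K ≥ 2 and let X be any set, and let p*_0, p*_1, …, p*_{K-1} : X → [0,1] satisfy p*_0(x) = 1 and p*_k(x) ≤ p*_{k-1}(x) for all x ∈ X and k = 1, …, K-1 (rank consistency). There exists a constant C > 0 depending only on K such that for every ε > 0 and every family of functions ĝ_1, …, ĝ_{K-1} : X → ℝ satisfying |ĝ_k(x) − log( q*_k(x) / (1 − q*_k(x)) )| ≤ ε for all x and k, where q*_k(x) := (p*_k(x) + ε)/(p*_{k-1}(x) + 2ε), the CONDOR outputs p_k(x) := ∏_{k'=1}^{k} σ(ĝ_{k'}(x)) satisfy |p_k(x) − p*_k(x)| ≤ C·ε for every x ∈ X and every k = 1, …, K-1. -/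
/-!
Write `P_k = ∏_{k' ≤ k} σ(ĝ_{k'})`, so `P_k = P_{k-1} σ(ĝ_k)`. Rank consistency puts
`q*_k` in `(0, 1)`, and `p*_k = q*_k (p*_{k-1} + 2ε) - ε` differs from `q*_k p*_{k-1}` by
`ε (2 q*_k - 1)`, of size at most `ε`. Since `σ` is `1/4`-Lipschitz and inverts the logit,
`|σ(ĝ_k) - q*_k| ≤ ε/4`, so each factor adds at most `5ε/4` to the error `|P_k - p*_k|`,
which starts at `0` for `k = 0`.
-/

noncomputable def sigmoid (t : ℝ) : ℝ := 1 / (1 + Real.exp (-t))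

open Finset

theorem sigmoid_eq_real_sigmoid : sigmoid = Real.sigmoid :=
  funext fun t => one_div (1 + Real.exp (-t))

namespace Real

theorem lipschitzWith_sigmoid : LipschitzWith 4⁻¹ sigmoid := by
  refine lipschitzWith_of_nnnorm_deriv_le differentiable_sigmoid fun x => ?_
  rw [deriv_sigmoid, ← NNReal.coe_le_coe, coe_nnnorm, Real.norm_eq_abs, NNReal.coe_inv,
    abs_of_pos (mul_pos (sigmoid_pos x) (by linarith [sigmoid_lt_one x]))]
  norm_num
  nlinarith [sq_nonneg (sigmoid x - 2⁻¹)]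

theorem sigmoid_log_div_one_sub {q : ℝ} (h0 : 0 < q) (h1 : q < 1) :
    sigmoid (log (q / (1 - q))) = q := by
  have h1' : 0 < 1 - q := by linarith
  rw [sigmoid_def, exp_neg, exp_log (div_pos h0 h1')]
  field_simp
  ring

theorem abs_sigmoid_sub_le {q : ℝ} (h0 : 0 < q) (h1 : q < 1) (t : ℝ) :
    |sigmoid t - q| ≤ 4⁻¹ * |t - log (q / (1 - q))| := by
  conv_lhs => rw [← sigmoid_log_div_one_sub h0 h1]
  simpa only [Real.dist_eq, NNReal.coe_inv, NNReal.coe_ofNat] using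
    lipschitzWith_sigmoid.dist_le_mul t (log (q / (1 - q)))

end Real

/-- `regularizedConditional (p*_k x) (p*_{k-1} x) ε` is the paper's `q*_k x`. -/
noncomputable def regularizedConditional (p' p ε : ℝ) : ℝ := (p' + ε) / (p + 2 * ε)

section RegularizedConditional

variable {p' p ε : ℝ}

theorem regularizedConditional_mem_Ioo (hp' : 0 ≤ p') (hle : p' ≤ p) (hε : 0 < ε) :
    regularizedConditional p' p ε ∈ Set.Ioo 0 1 := by
  have hden : 0 < p + 2 * ε := by linarith
  exact ⟨div_pos (by linarith) hden, (div_lt_one hden).2 (by linarith)⟩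

theorem abs_mul_sub_le_of_regularizedConditional (hp' : 0 ≤ p') (hle : p' ≤ p) (hε : 0 < ε)
    {Q s : ℝ} (hQ0 : 0 ≤ Q) (hQ1 : Q ≤ 1) :
    |Q * s - p'| ≤ |Q - p| + |s - regularizedConditional p' p ε| + ε := by
  set q := regularizedConditional p' p ε
  obtain ⟨hq0, hq1⟩ := regularizedConditional_mem_Ioo hp' hle hε
  have hq : q * (p + 2 * ε) = p' + ε := div_mul_cancel₀ _ (by linarith)
  have hsplit : Q * s - p' = Q * (s - q) + q * (Q - p) + ε * (1 - 2 * q) := by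
    linear_combination hq
  have hQterm : |Q * (s - q)| ≤ |s - q| := by
    rw [abs_mul, abs_of_nonneg hQ0]
    exact mul_le_of_le_one_left (abs_nonneg _) hQ1
  have hqterm : |q * (Q - p)| ≤ |Q - p| := by
    rw [abs_mul, abs_of_pos hq0]
    exact mul_le_of_le_one_left (abs_nonneg _) hq1.le
  have hεterm : |ε * (1 - 2 * q)| ≤ ε := by
    rw [abs_mul, abs_of_pos hε]
    exact mul_le_of_le_one_right hε.le (abs_le.2 ⟨by linarith, by linarith⟩)
  rw [hsplit]
  linarith [abs_add_three (Q * (s - q)) (q * (Q - p)) (ε * (1 - 2 * q))]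

end RegularizedConditional

theorem abs_prod_Icc_sub_le {s p : ℕ → ℝ} {n : ℕ} {δ ε : ℝ} (hε : 0 < ε)
    (hs : ∀ i, 0 ≤ s i ∧ s i ≤ 1) (hp0 : p 0 = 1) (hp : ∀ k ≤ n, 0 ≤ p k)
    (hanti : ∀ k < n, p (k + 1) ≤ p k)
    (happrox : ∀ k < n, |s (k + 1) - regularizedConditional (p (k + 1)) (p k) ε| ≤ δ) :
    ∀ k ≤ n, |∏ i ∈ Icc 1 k, s i - p k| ≤ k * (δ + ε) := by
  intro k hk
  induction k with
  | zero => simp [hp0]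
  | succ k ih =>
    have hprod0 : 0 ≤ ∏ i ∈ Icc 1 k, s i := prod_nonneg fun i _ => (hs i).1
    have hprod1 : ∏ i ∈ Icc 1 k, s i ≤ 1 :=
      prod_le_one (fun i _ => (hs i).1) fun i _ => (hs i).2
    rw [prod_Icc_succ_top (by omega)]
    have hstep := abs_mul_sub_le_of_regularizedConditional (hp (k + 1) hk) (hanti k hk) hε
      hprod0 hprod1 (s := s (k + 1))
    push_cast
    linarith [ih (by omega), happrox k hk]

/-- CONDOR expressiveness: for any rank consistent targets
`p* 0 ≡ 1 ≥ p* 1 ≥ ⋯ ≥ p* (K-1) ≥ 0` on a set `X`, there is `C > 0` depending only on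
`K` such that whenever the upstream outputs `ĝ k` approximate the logits of the
regularized conditionals `q*_k = (p*_k + ε)/(p*_{k-1} + 2ε)` to within `ε`, the CONDOR
outputs `∏_{k'=1}^{k} σ(ĝ_{k'}(x))` approximate `p*_k(x)` to within `C·ε`. -/
theorem condor_expressiveness {X : Type*} (K : ℕ) (hK : 2 ≤ K)
    (pstar : ℕ → X → ℝ)
    (hp0 : ∀ x, pstar 0 x = 1)
    (hrange : ∀ k x, k ≤ K - 1 → 0 ≤ pstar k x ∧ pstar k x ≤ 1)
    (hmono : ∀ k x, 1 ≤ k → k ≤ K - 1 → pstar k x ≤ pstar (k - 1) x) :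
    ∃ C : ℝ, 0 < C ∧
      ∀ ε : ℝ, 0 < ε →
        ∀ g : ℕ → X → ℝ,
          (∀ k x, 1 ≤ k → k ≤ K - 1 →
            |g k x - Real.log ((pstar k x + ε) / (pstar (k - 1) x + 2 * ε) /
              (1 - (pstar k x + ε) / (pstar (k - 1) x + 2 * ε)))| ≤ ε) →
          ∀ k x, 1 ≤ k → k ≤ K - 1 →
            |(∏ k' ∈ Finset.Icc 1 k, sigmoid (g k' x)) - pstar k x| ≤ C * ε := by
  refine ⟨2 * K, by positivity, fun ε hε g hg k x _ hk => ?_⟩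
  rw [sigmoid_eq_real_sigmoid]
  have hanti : ∀ j < K - 1, pstar (j + 1) x ≤ pstar j x := fun j hj =>
    hmono (j + 1) x (by omega) hj
  have happrox : ∀ j < K - 1, |Real.sigmoid (g (j + 1) x) -
      regularizedConditional (pstar (j + 1) x) (pstar j x) ε| ≤ 4⁻¹ * ε := fun j hj => by
    obtain ⟨hq0, hq1⟩ := regularizedConditional_mem_Ioo (hrange (j + 1) x hj).1 (hanti j hj) hε
    have hlogit := hg (j + 1) x (by omega) hj
    rw [Nat.add_sub_cancel] at hlogit
    exact (Real.abs_sigmoid_sub_le hq0 hq1 _).trans (by gcongr; exact hlogit)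
  have hbound := abs_prod_Icc_sub_le (s := fun i => Real.sigmoid (g i x)) (p := fun i => pstar i x)
    hε (fun i => ⟨Real.sigmoid_nonneg _, Real.sigmoid_le_one _⟩) (hp0 x)
    (fun j hj => (hrange j x hj).1) hanti happrox k hk
  have hkK : (k : ℝ) ≤ K := by exact_mod_cast (show k ≤ K by omega)
  nlinarith
end

section
/- Let σ(t) := 1/(1 + e^{−t}), and define q*_1(x) := 1/(1 + e^{x}) and q*_2(x) := 1/(1 + e^{2x}) for x ∈ ℝ. There exists ε > 0 such that for every function a : ℝ → ℝ and all real numbers b_1, b_2, there exists x ∈ ℝ with either | σ(a(x) + b_1) − q*_1(x) | > ε or | σ(a(x) + b_2) / σ(a(x) + b_1) − q*_2(x) | > ε. -/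
lemma sigmoid_pos (t : ℝ) : 0 < sigmoid t := by
  unfold sigmoid
  positivity

lemma sigmoid_ratio_ge (u v : ℝ) : sigmoid (v - u) ≤ sigmoid v / sigmoid u := by
  have hu := sigmoid_pos u
  rw [le_div_iff₀ hu]
  unfold sigmoid
  have hq : Real.exp (-(v-u)) * Real.exp (-u) = Real.exp (-v) := by
    rw [← Real.exp_add]; ring_nf
  have h1 := Real.exp_pos (-(v-u))
  have h2 := Real.exp_pos (-u)
  have h3 := Real.exp_pos (-v)
  rw [div_mul_div_comm, one_mul, div_le_div_iff₀ (by positivity) (by positivity)]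
  nlinarith [mul_pos h1 h2, mul_pos h2 h3]

/-- CORAL cannot approximate every rank consistent solution: with targets
`q*_1(x) = 1/(1 + e^x)` and `q*_2(x) = 1/(1 + e^{2x})`, there is `ε > 0` such that
for every shared output `a : ℝ → ℝ` and biases `b₁, b₂`, some `x` has either
`|σ(a(x)+b₁) − q*_1(x)| > ε` or `|σ(a(x)+b₂)/σ(a(x)+b₁) − q*_2(x)| > ε`. -/
theorem coral_not_expressive :
    ∃ ε : ℝ, 0 < ε ∧
      ∀ (a : ℝ → ℝ) (b₁ b₂ : ℝ), ∃ x : ℝ,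
        ε < |sigmoid (a x + b₁) - 1 / (1 + Real.exp x)| ∨
        ε < |sigmoid (a x + b₂) / sigmoid (a x + b₁) - 1 / (1 + Real.exp (2 * x))| := by
  refine ⟨1/100, by norm_num, ?_⟩
  intro a b₁ b₂
  by_contra h
  push_neg at h
  obtain ⟨h01, h02⟩ := h 0
  obtain ⟨_, hT2⟩ := h 10
  set u0 := a 0 + b₁ with hu0
  set v0 := a 0 + b₂ with hv0
  set uT := a 10 + b₁ with huT
  set vT := a 10 + b₂ with hvT
  norm_num [Real.exp_zero] at h01 h02
  rw [abs_le] at h01 h02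
  -- bounds on sigmoid u0
  have hpu0 := sigmoid_pos u0
  have hsu0_hi : sigmoid u0 ≤ 51/100 := by linarith [h01.2]
  have hsu0_lo : 49/100 ≤ sigmoid u0 := by linarith [h01.1]
  -- bound on sigmoid v0
  have hratio0 : 49/100 ≤ sigmoid v0 / sigmoid u0 := by linarith [h02.1]
  have hsv0_lo : 2401/10000 ≤ sigmoid v0 := by
    have : 49/100 * sigmoid u0 ≤ sigmoid v0 := by
      rw [le_div_iff₀ hpu0] at hratio0
      linarith
    nlinarith
  -- exp bounds
  have hev0 : Real.exp (-v0) ≤ 7599/2401 := by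
    have hx := Real.exp_pos (-v0)
    unfold sigmoid at hsv0_lo
    rw [le_div_iff₀ (by positivity)] at hsv0_lo
    linarith
  have heu0 : Real.exp u0 ≤ 51/49 := by
    have hx := Real.exp_pos (-u0)
    unfold sigmoid at hsu0_hi
    rw [div_le_iff₀ (by positivity)] at hsu0_hi
    have hge : 49/51 ≤ Real.exp (-u0) := by nlinarith
    have : Real.exp u0 * Real.exp (-u0) = 1 := by
      rw [← Real.exp_add]; simp
    nlinarith [Real.exp_pos u0]
  -- σ(b₂ - b₁) ≥ 23/100
  have hc : Real.exp (-(v0 - u0)) ≤ 77/23 := by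
    have : Real.exp (-(v0 - u0)) = Real.exp (-v0) * Real.exp u0 := by
      rw [← Real.exp_add]; ring_nf
    rw [this]
    nlinarith [Real.exp_pos (-v0), Real.exp_pos u0]
  have hsc : 23/100 ≤ sigmoid (v0 - u0) := by
    unfold sigmoid
    rw [le_div_iff₀ (by positivity)]
    linarith
  -- the ratio at x = 10 is at least σ(b₂-b₁)
  have hdiff : vT - uT = v0 - u0 := by rw [hvT, huT, hv0, hu0]; ring
  have hrT : 23/100 ≤ sigmoid vT / sigmoid uT := by
    calc (23:ℝ)/100 ≤ sigmoid (v0 - u0) := hsc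
    _ = sigmoid (vT - uT) := by rw [hdiff]
    _ ≤ sigmoid vT / sigmoid uT := sigmoid_ratio_ge uT vT
  -- but the target at x = 10 is tiny
  have he20 : (99:ℝ) ≤ Real.exp (2 * 10) := by
    have h10 : (11:ℝ) ≤ Real.exp 10 := by
      linarith [Real.add_one_le_exp (10:ℝ)]
    have : Real.exp (2*10) = Real.exp 10 * Real.exp 10 := by
      rw [← Real.exp_add]; norm_num
    nlinarith
  have htgt : 1 / (1 + Real.exp (2 * 10)) ≤ 1/100 := by
    rw [div_le_div_iff₀ (by positivity) (by norm_num)]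
    linarith
  rw [abs_le] at hT2
  have := hT2.2
  linarith
end
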